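/- arXiv:1501.00689 — 2 statements merged into one kernel-verified Lean document; each statement's English description precedes it below -/
import Mathlib

section
/- For any limit operator L on a set X, the derived topology τ_L is sequential: every subset of X that is sequentially closed for τ_L (i.e., contains all limits in τ_L of convergent sequences of its elements) is closed for τ_L. -/
open Set Filter Topology

universe u

/-- A limit operator on `X`: a map from sequences to sets of "limits",
compatible with subsequences. -/
def IsLimitOp {X : Type u} (L : (ℕ → X) → Set X) : Prop :=
  ∀ (σ : ℕ → X) (φ : ℕ → ℕ), StrictMono φ → L σ ⊆ L (σ ∘ φ)

/-- `C` is sequentially closed with respect to the limit operator `L`. -/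
def SeqClosedFor {X : Type u} (L : (ℕ → X) → Set X) (C : Set X) : Prop :=
  ∀ σ : ℕ → X, (∀ n, σ n ∈ C) → L σ ⊆ C

/-- The topology derived from a limit operator `L`: its closed sets are exactly
the sets `C` such that `L σ ⊆ C` for every sequence `σ` with values in `C`. -/
def derivedTop {X : Type u} (L : (ℕ → X) → Set X) (hL : IsLimitOp L) :
    TopologicalSpace X :=
  TopologicalSpace.ofClosed {C | SeqClosedFor L C}
    (fun σ h => absurd (h 0) (Set.notMem_empty _))
    (fun A hA σ hσ p hp => by
      rw [Set.mem_sInter]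
      intro C hC
      exact hA hC σ (fun n => Set.mem_sInter.mp (hσ n) C hC) hp)
    (by
      intro C hC B hB σ hσ p hp
      by_cases hinf : {n | σ n ∈ C}.Infinite
      · exact Or.inl (hC _ (fun n => Nat.nth_mem_of_infinite hinf n)
          (hL σ _ (Nat.nth_strictMono hinf) hp))
      · have hfin : {n | σ n ∈ C}.Finite := Set.not_infinite.mp hinf
        have hBinf : {n | σ n ∈ B}.Infinite :=
          Set.Infinite.mono (fun n hn => (hσ n).resolve_left hn) hfin.infinite_compl
        exact Or.inr (hB _ (fun n => Nat.nth_mem_of_infinite hBinf n)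
          (hL σ _ (Nat.nth_strictMono hBinf) hp)))

/-- The limit operator associated to a topology `t`: it assigns to each sequence
the set of all its limits in `t`. -/
def assocLimOp {X : Type u} (t : TopologicalSpace X) : (ℕ → X) → Set X :=
  fun σ => {p | Filter.Tendsto σ Filter.atTop (@nhds X t p)}

theorem assocLimOp_isLimitOp {X : Type u} (t : TopologicalSpace X) :
    IsLimitOp (assocLimOp t) :=
  fun _σ _φ hφ _p hp => hp.comp hφ.tendsto_atTop

/-- `τ_Seq`: the topology derived from the limit operator associated to `t`. -/
def seqModTop {X : Type u} (t : TopologicalSpace X) : TopologicalSpace X :=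
  derivedTop (assocLimOp t) (assocLimOp_isLimitOp t)

/-- `L` is of first order on `D`. -/
def IsFirstOrderOpOn {X : Type u} (L : (ℕ → X) → Set X) (hL : IsLimitOp L)
    (D : Set X) : Prop :=
  ∀ σ : ℕ → X, (∀ n, σ n ∈ D) → ∀ p ∈ D,
    (p ∈ L σ ↔ Filter.Tendsto σ Filter.atTop (@nhds X (derivedTop L hL) p))

/-- `L` is of first order. -/
def IsFirstOrderOp {X : Type u} (L : (ℕ → X) → Set X) (hL : IsLimitOp L) : Prop :=
  ∀ (σ : ℕ → X) (p : X),
    p ∈ L σ ↔ Filter.Tendsto σ Filter.atTop (@nhds X (derivedTop L hL) p)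

/-- A limit operator is coherent if every constant sequence has its value as a limit. -/
def CoherentOp {X : Type u} (L : (ℕ → X) → Set X) : Prop :=
  ∀ x : X, x ∈ L (fun _ => x)

/-- The transfinite iterates of a limit operator: `L^1 σ = L σ` and, for `i ≠ 1`,
`L^i σ = {p | p ∈ L ρ for some sequence ρ with values in ⋃_{j<i} L^j σ}`. -/
noncomputable def iterOp {X : Type u} (L : (ℕ → X) → Set X) (σ : ℕ → X)
    (i : Ordinal.{0}) : Set X :=
  if i = 1 then L σ
  else {p | ∃ ρ : ℕ → X,
    (∀ n, ∃ j : Ordinal.{0}, ∃ _hj : j < i, ρ n ∈ iterOp L σ j) ∧ p ∈ L ρ}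
termination_by i

open Classical in
/-- The modified limit operator `L*` relative to a subset `D`. -/
noncomputable def modOp {X : Type u} (L : (ℕ → X) → Set X) (D : Set X) :
    (ℕ → X) → Set X := fun σ =>
  if ∃ φ : ℕ → ℕ, StrictMono φ ∧ ∃ p ∈ D, p ∈ L (σ ∘ φ) then L σ ∩ D else L σ

/-- The `D`-separating topology `τ*`: generated by the subbasis consisting of the
`t`-open sets together with the complements of compact subsets of `D`. -/
def sepTop {X : Type u} (t : TopologicalSpace X) (D : Set X) : TopologicalSpace X :=
  TopologicalSpace.generateFrom
    ({U : Set X | @IsOpen X t U} ∪ {V : Set X | ∃ K, K ⊆ D ∧ @IsCompact X t K ∧ V = Kᶜ})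

/-- Condition (A_Fin): `t'` refines `t`. -/
def AFin {X : Type u} (t t' : TopologicalSpace X) : Prop :=
  ∀ U : Set X, @IsOpen X t U → @IsOpen X t' U

/-- Condition (A_Sep): every `p ∈ D` and `q ∉ D` are separated by a `t`-open set
and a `t'`-open set. -/
def ASep {X : Type u} (t t' : TopologicalSpace X) (D : Set X) : Prop :=
  ∀ p ∈ D, ∀ q ∈ (Dᶜ : Set X), ∃ U V : Set X,
    @IsOpen X t U ∧ @IsOpen X t' V ∧ p ∈ U ∧ q ∈ V ∧ U ∩ V = ∅

/-- The restriction of a limit operator `L` to a subset `D`, as an operator on `↥D`: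
`L|_D(σ) = L(σ) ∩ D`. -/
def restrictOp {X : Type u} (L : (ℕ → X) → Set X) (D : Set X) :
    (ℕ → D) → Set D :=
  fun σ => {d : D | (d : X) ∈ L (fun n => (σ n : X))}

/- A limit `p ∈ L σ` is a genuine `τ_L`-limit of `σ`: if `σ` left an open `U ∋ p` infinitely
often, the subsequence in the closed set `Uᶜ` would still have `p` as an `L`-limit. Hence a
`τ_L`-sequentially closed set contains all its `L`-limits, which is closedness in `τ_L`. -/

section DerivedTop

variable {X : Type u} (L : (ℕ → X) → Set X) (hL : IsLimitOp L)

theorem isClosed_derivedTop_iff (C : Set X) :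
    IsClosed[derivedTop L hL] C ↔ SeqClosedFor L C := by
  rw [← @isOpen_compl_iff X _ (derivedTop L hL)]
  exact iff_of_eq (congrArg (SeqClosedFor L) (compl_compl C))

theorem tendsto_derivedTop_of_mem {σ : ℕ → X} {p : X} (hp : p ∈ L σ) :
    Tendsto σ atTop (@nhds X (derivedTop L hL) p) := by
  let := derivedTop L hL
  refine tendsto_nhds.mpr fun U hU hpU => ?_
  by_contra hnot
  obtain ⟨φ, hφ, hφU⟩ := extraction_of_frequently_atTop (not_eventually.mp hnot)
  have hUc : SeqClosedFor L Uᶜ :=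
    (isClosed_derivedTop_iff L hL Uᶜ).mp hU.isClosed_compl
  exact hUc (σ ∘ φ) hφU (hL σ φ hφ hp) hpU

end DerivedTop

theorem stmt_2 {X : Type u} (L : (ℕ → X) → Set X) (hL : IsLimitOp L) :
    ∀ C : Set X,
      (∀ (σ : ℕ → X) (p : X), (∀ n, σ n ∈ C) →
        Filter.Tendsto σ Filter.atTop (@nhds X (derivedTop L hL) p) → p ∈ C) →
      @IsClosed X (derivedTop L hL) C := by
  intro C hC
  rw [isClosed_derivedTop_iff]
  exact fun σ hσ p hp => hC σ p hσ (tendsto_derivedTop_of_mem L hL hp)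
end

section
/- Let (X, τ) be a topological space and D ⊆ X an open subset that, with the subspace topology, is Hausdorff and locally compact. Let τ* be the topology on X generated by the subbasis τ ∪ {X \ K : K a compact subset of D}. If τ' is any topology on X satisfying (A_Fin) and (A_Sep), then τ* ⊆ τ'. Consequently, τ* is the unique topology on X satisfying (A_Fin), (A_Sep) and which is minimal among the topologies satisfying (A_Fin) and (A_Sep). -/
open Set Filter Topology

universe u

/-!
Every basic open set of `τ*` is `τ'`-open. For a `τ`-open set this is (A_Fin). For `X \ K` with
`K ⊆ D` compact, a point of `D \ K` has the `τ`-open neighbourhood `D \ K` (compact sets are closed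
in the Hausdorff space `D`), while for a point `q ∉ D`, (A_Sep) makes the `τ`-neighbourhood filter
of each point of `K` disjoint from the `τ'`-neighbourhood filter of `q`, and compactness of `K`
turns this into a `τ'`-neighbourhood of `q` missing `K`. Conversely `τ*` satisfies (A_Sep) because
local compactness gives every `p ∈ D` a compact neighbourhood `K ⊆ D`, separated from `X \ D` by
`X \ K`.
-/

open TopologicalSpace

theorem IsOpen.isOpen_diff_of_isCompact {X : Type*} [TopologicalSpace X] {D K : Set X}
    (hD : IsOpen D) [T2Space D] (hK : IsCompact K) (hKD : K ⊆ D) : IsOpen (D \ K) := by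
  have hK' : IsCompact ((↑) ⁻¹' K : Set D) := by
    rwa [Subtype.isCompact_iff, Subtype.image_preimage_coe, inter_eq_right.mpr hKD]
  simpa using hD.isOpenMap_subtype_val _ hK'.isClosed.isOpen_compl

theorem IsOpen.exists_isCompact_subset_mem_nhds {X : Type*} [TopologicalSpace X] {D : Set X}
    (hD : IsOpen D) [LocallyCompactSpace D] {p : X} (hp : p ∈ D) :
    ∃ K ⊆ D, IsCompact K ∧ K ∈ 𝓝 p := by
  obtain ⟨K, hK, hKp⟩ := exists_compact_mem_nhds (⟨p, hp⟩ : D)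
  exact ⟨(↑) '' K, Subtype.coe_image_subset D K, hK.image continuous_subtype_val,
    hD.isOpenMap_subtype_val.image_mem_nhds hKp⟩

theorem IsCompact.compl_mem_nhds_of_forall_disjoint_nhds {X : Type*} {t' : TopologicalSpace X}
    [TopologicalSpace X] {K : Set X} (hK : IsCompact K) {q : X}
    (h : ∀ p ∈ K, Disjoint (𝓝 p) (@nhds X t' q)) : Kᶜ ∈ @nhds X t' q :=
  disjoint_principal_left.1 ((hK.disjoint_nhdsSet_left.2 h).mono_left principal_le_nhdsSet)

theorem ASep.disjoint_nhds {X : Type u} {t t' : TopologicalSpace X} {D : Set X}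
    (h : ASep t t' D) {p q : X} (hp : p ∈ D) (hq : q ∉ D) :
    Disjoint (@nhds X t p) (@nhds X t' q) := by
  obtain ⟨U, V, hU, hV, hpU, hqV, hUV⟩ := h p hp q hq
  exact Filter.disjoint_of_disjoint_of_mem (disjoint_iff_inter_eq_empty.2 hUV)
    (@IsOpen.mem_nhds X t _ _ hU hpU) (@IsOpen.mem_nhds X t' _ _ hV hqV)

section

-- `t` comes after `t'` so that it is the instance picked up by `IsOpen`, `IsCompact`, `𝓝`.
variable {X : Type u} {t' : TopologicalSpace X} {t : TopologicalSpace X} {D : Set X}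

theorem isOpen_compl_of_aFin_of_aSep (hD : IsOpen D) [T2Space D]
    (hA : AFin t t') (hS : ASep t t' D) {K : Set X} (hKD : K ⊆ D) (hK : IsCompact K) :
    IsOpen[t'] Kᶜ := by
  refine (@isOpen_iff_mem_nhds X t' _).2 fun q hq => ?_
  by_cases hqD : q ∈ D
  · have hDK : IsOpen[t'] (D \ K) := hA _ (hD.isOpen_diff_of_isCompact hK hKD)
    exact mem_of_superset (@IsOpen.mem_nhds X t' _ _ hDK ⟨hqD, hq⟩) (sdiff_subset_compl _ _)
  · exact hK.compl_mem_nhds_of_forall_disjoint_nhds fun p hp => hS.disjoint_nhds (hKD hp) hqD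

theorem sepTop_le (hD : IsOpen D) [T2Space D]
    (hA : AFin t t') (hS : ASep t t' D) : t' ≤ sepTop t D := by
  refine le_generateFrom ?_
  rintro s (hs | ⟨K, hKD, hK, rfl⟩)
  · exact hA s hs
  · exact isOpen_compl_of_aFin_of_aSep hD hA hS hKD hK

theorem aFin_sepTop : AFin t (sepTop t D) :=
  fun _ hU => isOpen_generateFrom_of_mem (Or.inl hU)

theorem aSep_sepTop (hD : IsOpen D) [LocallyCompactSpace D] : ASep t (sepTop t D) D := by
  intro p hp q hq
  obtain ⟨K, hKD, hK, hKp⟩ := hD.exists_isCompact_subset_mem_nhds hp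
  refine ⟨interior K, Kᶜ, isOpen_interior, isOpen_generateFrom_of_mem (Or.inr ⟨K, hKD, hK, rfl⟩),
    mem_interior_iff_mem_nhds.2 hKp, fun hqK => hq (hKD hqK), ?_⟩
  rw [← disjoint_iff_inter_eq_empty]
  exact disjoint_compl_right.mono_left interior_subset

end

theorem stmt_9 {X : Type u} (t : TopologicalSpace X) (D : Set X)
    (hD : @IsOpen X t D)
    (hT2 : @T2Space D (TopologicalSpace.induced (Subtype.val : D → X) t))
    (hLC : @LocallyCompactSpace D (TopologicalSpace.induced (Subtype.val : D → X) t)) :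
    (∀ t' : TopologicalSpace X, AFin t t' → ASep t t' D →
      ∀ U : Set X, @IsOpen X (sepTop t D) U → @IsOpen X t' U) ∧
    AFin t (sepTop t D) ∧ ASep t (sepTop t D) D ∧
    (∀ t' : TopologicalSpace X, AFin t t' → ASep t t' D →
      (∀ U : Set X, @IsOpen X t' U → @IsOpen X (sepTop t D) U) →
      ∀ U : Set X, @IsOpen X (sepTop t D) U → @IsOpen X t' U) ∧
    (∀ t'' : TopologicalSpace X, AFin t t'' → ASep t t'' D →
      (∀ t' : TopologicalSpace X, AFin t t' → ASep t t' D →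
        (∀ U : Set X, @IsOpen X t' U → @IsOpen X t'' U) →
        ∀ U : Set X, @IsOpen X t'' U → @IsOpen X t' U) →
      t'' = sepTop t D) := by
  have hSep := aSep_sepTop (t := t) hD
  have hle : ∀ t', AFin t t' → ASep t t' D → t' ≤ sepTop t D :=
    fun _ hA hS => sepTop_le (t := t) hD hA hS
  exact ⟨fun t' hA hS => hle t' hA hS, aFin_sepTop, hSep, fun t' hA hS _ => hle t' hA hS,
    fun t'' hA hS hmin => le_antisymm (hle t'' hA hS) (hmin _ aFin_sepTop hSep (hle t'' hA hS))⟩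
end
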